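/- The softmax-attention flow map is Lipschitz in the initial data with exponential constant: if (x_i(t)) and (y_i(t)) are two solutions of the (SA) dynamics on S^{d-1} with n particles and parameter β > 0, then max_{j∈[n]} ‖x_j(t) - y_j(t)‖ ≤ c(β)^{nt} · max_{j∈[n]} ‖x_j(0) - y_j(0)‖ for all t ≥ 0, where c(β) = e^{10 max{1,β}}. -/

import Mathlib

/-! On the product of unit spheres with the sup distance, the self-attention field is Lipschitz
with constant `16β + 4`: the logits `β⟪x_i, x_k⟫` move by at most `2βM` when every particle moves
by at most `M`, softmax turns this into an `ℓ¹` change of at most `8βM` in the attention weights,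
and the tangential projection at `x_i` at most doubles the resulting error. For `n ≥ 2` this is
below `10 max(1, β) n`, and a single particle feels no force at all. Grönwall's inequality for
two trajectories of a Lipschitz field then gives the exponential bound. -/

open Set
open scoped RealInnerProductSpace

/-- The self-attention vector field on the sphere. -/
noncomputable def SAfield {d n : ℕ} (β : ℝ) (x : Fin n → EuclideanSpace ℝ (Fin d))
    (i : Fin n) : EuclideanSpace ℝ (Fin d) :=
  let v := (∑ k, Real.exp (β * ⟪x i, x k⟫))⁻¹ •
      ∑ j, Real.exp (β * ⟪x i, x j⟫) • x j
  v - ⟪x i, v⟫ • x i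

open Finset Real

noncomputable def softmax {ι : Type*} [Fintype ι] (u : ι → ℝ) (j : ι) : ℝ :=
  (∑ k, exp (u k))⁻¹ * exp (u j)

section Softmax

variable {ι : Type*} [Fintype ι]

lemma softmax_nonneg (u : ι → ℝ) (j : ι) : 0 ≤ softmax u j := by
  unfold softmax; positivity

lemma sum_softmax [Nonempty ι] (u : ι → ℝ) : ∑ j, softmax u j = 1 := by
  simp only [softmax, ← mul_sum]
  exact inv_mul_cancel₀ (sum_pos (fun k _ => exp_pos _) univ_nonempty).ne'

lemma exp_neg_two_mul_mul_softmax_le {u v : ι → ℝ} {ε : ℝ} (h : ∀ k, |u k - v k| ≤ ε)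
    (j : ι) : exp (-(2 * ε)) * softmax u j ≤ softmax v j := by
  have hnum : exp (-ε) * exp (u j) ≤ exp (v j) := by
    rw [← exp_add]; exact exp_le_exp.2 (by linarith [(abs_le.1 (h j)).2])
  have hden : ∑ k, exp (v k) ≤ exp ε * ∑ k, exp (u k) := by
    rw [mul_sum]
    refine sum_le_sum fun k _ => ?_
    rw [← exp_add]; exact exp_le_exp.2 (by linarith [(abs_le.1 (h k)).1])
  have : Nonempty ι := ⟨j⟩
  have hv : 0 < ∑ k, exp (v k) := sum_pos (fun k _ => exp_pos _) univ_nonempty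
  calc exp (-(2 * ε)) * softmax u j
      = (exp ε * ∑ k, exp (u k))⁻¹ * (exp (-ε) * exp (u j)) := by
        simp only [softmax, mul_inv, ← exp_neg]
        rw [show -(2 * ε) = -ε + -ε by ring, exp_add]; ring
    _ ≤ (∑ k, exp (v k))⁻¹ * exp (v j) := by gcongr
    _ = softmax v j := rfl

lemma abs_softmax_sub_softmax_le {u v : ι → ℝ} {ε : ℝ} (h : ∀ k, |u k - v k| ≤ ε) (j : ι) :
    |softmax u j - softmax v j| ≤ 2 * ε * (softmax u j + softmax v j) := by
  have huv := exp_neg_two_mul_mul_softmax_le h j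
  have hvu := exp_neg_two_mul_mul_softmax_le (u := v) (v := u)
    (fun k => by rw [abs_sub_comm]; exact h k) j
  have hexp : 1 - 2 * ε ≤ exp (-(2 * ε)) := by linarith [add_one_le_exp (-(2 * ε))]
  have ha := softmax_nonneg u j
  have hb := softmax_nonneg v j
  have hε : 0 ≤ ε := (abs_nonneg _).trans (h j)
  have := mul_le_mul_of_nonneg_right hexp ha
  have := mul_le_mul_of_nonneg_right hexp hb
  rw [abs_le]; constructor <;> nlinarith

lemma sum_abs_softmax_sub_softmax_le [Nonempty ι] {u v : ι → ℝ} {ε : ℝ}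
    (h : ∀ k, |u k - v k| ≤ ε) : ∑ j, |softmax u j - softmax v j| ≤ 4 * ε :=
  calc ∑ j, |softmax u j - softmax v j|
      ≤ ∑ j, 2 * ε * (softmax u j + softmax v j) :=
        sum_le_sum fun j _ => abs_softmax_sub_softmax_le h j
    _ = 4 * ε := by rw [← mul_sum, sum_add_distrib, sum_softmax, sum_softmax]; ring

end Softmax

section InnerProductSpace

variable {E : Type*} [NormedAddCommGroup E] [InnerProductSpace ℝ E]

lemma abs_inner_sub_inner_le {a b c d : E} (hb : ‖b‖ ≤ 1) (hc : ‖c‖ ≤ 1) :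
    |⟪a, b⟫ - ⟪c, d⟫| ≤ ‖a - c‖ + ‖b - d‖ := by
  have hsplit : ⟪a, b⟫ - ⟪c, d⟫ = ⟪a - c, b⟫ + ⟪c, b - d⟫ := by
    rw [inner_sub_left, inner_sub_right]; ring
  calc |⟪a, b⟫ - ⟪c, d⟫| ≤ |⟪a - c, b⟫| + |⟪c, b - d⟫| := hsplit ▸ abs_add_le _ _
    _ ≤ ‖a - c‖ * ‖b‖ + ‖c‖ * ‖b - d‖ :=
        add_le_add (abs_real_inner_le_norm _ _) (abs_real_inner_le_norm _ _)
    _ ≤ ‖a - c‖ + ‖b - d‖ := by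
        gcongr
        · exact mul_le_of_le_one_right (norm_nonneg _) hb
        · exact mul_le_of_le_one_left (norm_nonneg _) hc

lemma norm_tangentProj_sub_le {x y v w : E} (hx : ‖x‖ ≤ 1) (hy : ‖y‖ ≤ 1) (hv : ‖v‖ ≤ 1) :
    ‖(v - ⟪x, v⟫ • x) - (w - ⟪y, w⟫ • y)‖ ≤ 2 * ‖v - w‖ + 2 * ‖x - y‖ := by
  have hsplit : (v - ⟪x, v⟫ • x) - (w - ⟪y, w⟫ • y)
      = (v - w) - (⟪x, v⟫ • (x - y) + (⟪x, v⟫ - ⟪y, w⟫) • y) := by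
    rw [smul_sub, sub_smul]; abel
  have hxv : |⟪x, v⟫| ≤ 1 := (abs_real_inner_le_norm x v).trans (mul_le_one₀ hx (norm_nonneg _) hv)
  have hxvyw : |⟪x, v⟫ - ⟪y, w⟫| ≤ ‖x - y‖ + ‖v - w‖ := abs_inner_sub_inner_le hv hy
  rw [hsplit]
  calc ‖(v - w) - (⟪x, v⟫ • (x - y) + (⟪x, v⟫ - ⟪y, w⟫) • y)‖
      ≤ ‖v - w‖ + (|⟪x, v⟫| * ‖x - y‖ + |⟪x, v⟫ - ⟪y, w⟫| * ‖y‖) := by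
        refine (norm_sub_le _ _).trans (add_le_add_right ((norm_add_le _ _).trans_eq ?_) _)
        rw [norm_smul, norm_smul, Real.norm_eq_abs, Real.norm_eq_abs]
    _ ≤ ‖v - w‖ + (1 * ‖x - y‖ + (‖x - y‖ + ‖v - w‖) * 1) := by gcongr
    _ = 2 * ‖v - w‖ + 2 * ‖x - y‖ := by ring

lemma norm_sum_smul_sub_sum_smul_le {ι : Type*} [Fintype ι] {a b : ι → ℝ} {x y : ι → E}
    {M : ℝ} (hb : ∀ j, 0 ≤ b j) (hb1 : ∑ j, b j = 1) (hx : ∀ j, ‖x j‖ ≤ 1)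
    (hxy : ∀ j, ‖x j - y j‖ ≤ M) :
    ‖∑ j, a j • x j - ∑ j, b j • y j‖ ≤ ∑ j, |a j - b j| + M := by
  have hsplit : ∑ j, a j • x j - ∑ j, b j • y j
      = ∑ j, (a j - b j) • x j + ∑ j, b j • (x j - y j) := by
    simp only [sub_smul, smul_sub, sum_sub_distrib]; abel
  have hweights : ‖∑ j, (a j - b j) • x j‖ ≤ ∑ j, |a j - b j| := by
    refine (norm_sum_le _ _).trans (sum_le_sum fun j _ => ?_)
    rw [norm_smul, Real.norm_eq_abs]
    exact mul_le_of_le_one_right (abs_nonneg _) (hx j)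
  have hpoints : ∑ j, b j • (x j - y j) ∈ Metric.closedBall (0 : E) M :=
    (convex_closedBall 0 M).sum_mem (fun j _ => hb j) hb1
      fun j _ => mem_closedBall_zero_iff.2 (hxy j)
  rw [hsplit]
  exact (norm_add_le _ _).trans (add_le_add hweights (mem_closedBall_zero_iff.1 hpoints))

end InnerProductSpace

section SelfAttention

variable {d n : ℕ}

noncomputable def attention (β : ℝ) (x : Fin n → EuclideanSpace ℝ (Fin d)) (i : Fin n) :
    EuclideanSpace ℝ (Fin d) :=
  ∑ j, softmax (fun k => β * ⟪x i, x k⟫) j • x j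

lemma SAfield_eq_attention (β : ℝ) (x : Fin n → EuclideanSpace ℝ (Fin d)) (i : Fin n) :
    SAfield β x i = attention β x i - ⟪x i, attention β x i⟫ • x i := by
  simp only [SAfield, attention, softmax, smul_sum, smul_smul]

lemma norm_attention_le (β : ℝ) {x : Fin n → EuclideanSpace ℝ (Fin d)} (hx : ∀ j, ‖x j‖ ≤ 1)
    (i : Fin n) : ‖attention β x i‖ ≤ 1 := by
  have : Nonempty (Fin n) := ⟨i⟩
  rw [← mem_closedBall_zero_iff]
  exact (convex_closedBall 0 1).sum_mem (fun j _ => softmax_nonneg _ j) (sum_softmax _)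
    fun j _ => mem_closedBall_zero_iff.2 (hx j)

lemma norm_attention_sub_le (β : ℝ) {x y : Fin n → EuclideanSpace ℝ (Fin d)} {M : ℝ}
    (hx : ∀ j, ‖x j‖ ≤ 1) (hy : ∀ j, ‖y j‖ ≤ 1) (hxy : ∀ j, ‖x j - y j‖ ≤ M) (i : Fin n) :
    ‖attention β x i - attention β y i‖ ≤ (8 * |β| + 1) * M := by
  have : Nonempty (Fin n) := ⟨i⟩
  have hlogits : ∀ k, |β * ⟪x i, x k⟫ - β * ⟪y i, y k⟫| ≤ |β| * (2 * M) := fun k => by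
    rw [← mul_sub, abs_mul]
    gcongr
    linarith [abs_inner_sub_inner_le (hx k) (hy i) (a := x i) (d := y k), hxy i, hxy k]
  calc ‖attention β x i - attention β y i‖
      ≤ ∑ j, |softmax (fun k => β * ⟪x i, x k⟫) j - softmax (fun k => β * ⟪y i, y k⟫) j| + M :=
        norm_sum_smul_sub_sum_smul_le (fun j => softmax_nonneg _ j) (sum_softmax _) hx hxy
    _ ≤ 4 * (|β| * (2 * M)) + M := by gcongr; exact sum_abs_softmax_sub_softmax_le hlogits
    _ = (8 * |β| + 1) * M := by ring

lemma norm_SAfield_sub_le (β : ℝ) {x y : Fin n → EuclideanSpace ℝ (Fin d)} {M : ℝ}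
    (hx : ∀ j, ‖x j‖ ≤ 1) (hy : ∀ j, ‖y j‖ ≤ 1) (hxy : ∀ j, ‖x j - y j‖ ≤ M) (i : Fin n) :
    ‖SAfield β x i - SAfield β y i‖ ≤ (16 * |β| + 4) * M := by
  rw [SAfield_eq_attention, SAfield_eq_attention]
  calc _ ≤ 2 * ‖attention β x i - attention β y i‖ + 2 * ‖x i - y i‖ :=
        norm_tangentProj_sub_le (hx i) (hy i) (norm_attention_le β hx i)
    _ ≤ 2 * ((8 * |β| + 1) * M) + 2 * M := by
        gcongr
        exacts [norm_attention_sub_le β hx hy hxy i, hxy i]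
    _ = (16 * |β| + 4) * M := by ring

lemma SAfield_fin_one_eq_zero (β : ℝ) {x : Fin 1 → EuclideanSpace ℝ (Fin d)} (hx : ‖x 0‖ = 1)
    (i : Fin 1) : SAfield β x i = 0 := by
  obtain rfl : i = 0 := Subsingleton.elim i 0
  have hattn : attention β x 0 = x 0 := by
    simp [attention, softmax, exp_ne_zero]
  rw [SAfield_eq_attention, hattn, real_inner_self_eq_norm_sq, hx, one_pow, one_smul, sub_self]

lemma lipschitzOnWith_SAfield {β : ℝ} (hβ : 0 ≤ β) :
    LipschitzOnWith (10 * max 1 β * n).toNNReal (SAfield (d := d) (n := n) β)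
      (univ.pi fun _ => Metric.sphere 0 1) := by
  refine LipschitzOnWith.of_dist_le_mul fun x hx y hy => ?_
  have hxn : ∀ j, ‖x j‖ = 1 := fun j => mem_sphere_zero_iff_norm.1 (hx j (mem_univ j))
  have hyn : ∀ j, ‖y j‖ = 1 := fun j => mem_sphere_zero_iff_norm.1 (hy j (mem_univ j))
  rw [Real.coe_toNNReal _ (by positivity)]
  refine dist_pi_le_iff (by positivity) |>.2 fun i => ?_
  rw [dist_eq_norm]
  rcases Nat.lt_or_ge n 2 with hn | hn
  · obtain rfl : n = 1 := by have := i.pos; omega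
    rw [SAfield_fin_one_eq_zero β (hxn 0), SAfield_fin_one_eq_zero β (hyn 0), sub_zero,
      norm_zero]
    positivity
  have hconst : 16 * |β| + 4 ≤ 10 * max 1 β * n := by
    have : (2 : ℝ) ≤ n := by exact_mod_cast hn
    rw [abs_of_nonneg hβ]
    nlinarith [le_max_left 1 β, le_max_right 1 β]
  calc _ ≤ (16 * |β| + 4) * dist x y :=
        norm_SAfield_sub_le β (fun j => (hxn j).le) (fun j => (hyn j).le)
          (fun j => (dist_eq_norm (x j) (y j)) ▸ dist_le_pi_dist x y j) i
    _ ≤ 10 * max 1 β * n * dist x y := by gcongr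

end SelfAttention

theorem stmt_15_general {d n : ℕ} (β : ℝ) (hβ : 0 < β)
    (x y : Fin n → ℝ → EuclideanSpace ℝ (Fin d))
    (hxs : ∀ i t, x i t ∈ Metric.sphere (0 : EuclideanSpace ℝ (Fin d)) 1)
    (hys : ∀ i t, y i t ∈ Metric.sphere (0 : EuclideanSpace ℝ (Fin d)) 1)
    (hxode : ∀ i, ∀ t ∈ Ici (0:ℝ),
      HasDerivAt (x i) (SAfield β (fun j => x j t) i) t)
    (hyode : ∀ i, ∀ t ∈ Ici (0:ℝ),
      HasDerivAt (y i) (SAfield β (fun j => y j t) i) t) :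
    ∀ t ∈ Ici (0:ℝ), ∀ j : Fin n,
      ‖x j t - y j t‖ ≤
        Real.exp (10 * max 1 β) ^ ((n : ℝ) * t) * ⨆ i, ‖x i 0 - y i 0‖ := by
  intro T hT j
  have hflow : ∀ z : Fin n → ℝ → EuclideanSpace ℝ (Fin d),
      (∀ i, ∀ t ∈ Ici (0:ℝ), HasDerivAt (z i) (SAfield β (fun j => z j t) i) t) →
      ∀ t ∈ Ici (0:ℝ), HasDerivAt (fun t i => z i t) (SAfield β fun j => z j t) t :=
    fun z hz t ht => hasDerivAt_pi.2 fun i => hz i t ht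
  have hcont : ∀ z : Fin n → ℝ → EuclideanSpace ℝ (Fin d),
      (∀ t ∈ Ici (0:ℝ), HasDerivAt (fun t i => z i t) (SAfield β fun j => z j t) t) →
      ContinuousOn (fun t i => z i t) (Icc 0 T) :=
    fun z hz t ht => (hz t ht.1).continuousAt.continuousWithinAt
  have hinit : dist (fun i => x i 0) (fun i => y i 0) ≤ ⨆ i, ‖x i 0 - y i 0‖ :=
    dist_pi_le_iff (Real.iSup_nonneg fun i => norm_nonneg _) |>.2 fun i =>
      (dist_eq_norm _ _).trans_le (le_ciSup (finite_range fun i => ‖x i 0 - y i 0‖).bddAbove i)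
  have hgronwall := dist_le_of_trajectories_ODE_of_mem (fun _ _ => lipschitzOnWith_SAfield hβ.le)
    (hcont x (hflow x hxode)) (fun t ht => (hflow x hxode t ht.1).hasDerivWithinAt)
    (fun t _ i _ => hxs i t) (hcont y (hflow y hyode))
    (fun t ht => (hflow y hyode t ht.1).hasDerivWithinAt) (fun t _ i _ => hys i t) hinit
    T ⟨hT, le_rfl⟩
  calc ‖x j T - y j T‖ = dist (x j T) (y j T) := (dist_eq_norm _ _).symm
    _ ≤ dist (fun i => x i T) (fun i => y i T) :=
        dist_le_pi_dist (fun i => x i T) (fun i => y i T) j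
    _ ≤ _ := hgronwall
    _ = _ := by rw [mul_comm, ← exp_mul, sub_zero, Real.coe_toNNReal _ (by positivity), mul_assoc]

/-- Lipschitz dependence of the self-attention flow on the initial data: for two
solutions `x, y` of the (SA) dynamics,
`max_j ‖x_j(t) - y_j(t)‖ ≤ c(β)^{nt} max_j ‖x_j(0) - y_j(0)‖` with
`c(β) = e^{10 max{1,β}}`. -/
theorem stmt_15 {d n : ℕ} (hn : 0 < n) (β : ℝ) (hβ : 0 < β)
    (x y : Fin n → ℝ → EuclideanSpace ℝ (Fin d))
    (hxs : ∀ i t, x i t ∈ Metric.sphere (0 : EuclideanSpace ℝ (Fin d)) 1)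
    (hys : ∀ i t, y i t ∈ Metric.sphere (0 : EuclideanSpace ℝ (Fin d)) 1)
    (hxode : ∀ i, ∀ t ∈ Ici (0:ℝ),
      HasDerivAt (x i) (SAfield β (fun j => x j t) i) t)
    (hyode : ∀ i, ∀ t ∈ Ici (0:ℝ),
      HasDerivAt (y i) (SAfield β (fun j => y j t) i) t) :
    ∀ t ∈ Ici (0:ℝ), ∀ j : Fin n,
      ‖x j t - y j t‖ ≤
        Real.exp (10 * max 1 β) ^ ((n : ℝ) * t) * ⨆ i, ‖x i 0 - y i 0‖ :=
  stmt_15_general β hβ x y hxs hys hxode hyode
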